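/- If Z = {(Z_i, ω_i)}_{i∈I} and W = {(W_i, ω_i)}_{i∈I} are fusion frames for H with Z_i = U(W_i) for all i, where U ∈ B(H) is invertible, then e(Z) = e(W). -/

import Mathlib

noncomputable section
open scoped ENNReal

/-- `W = {(W i, ω i)}` is a fusion frame for `H`. -/
def IsFusionFrame {H : Type} [NormedAddCommGroup H] [InnerProductSpace ℂ H]
    {ι : Type} (W : ι → Submodule ℂ H) [∀ i, (W i).HasOrthogonalProjection]
    (ω : ι → ℝ) : Prop :=
  (∀ i, 0 < ω i) ∧ ∃ A B : ℝ, 0 < A ∧ A ≤ B ∧ ∀ f : H,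
    (A * ‖f‖ ^ 2 ≤ ∑' i, ω i ^ 2 * ‖((W i).orthogonalProjectionOnto f : H)‖ ^ 2) ∧
    (∑' i, ω i ^ 2 * ‖((W i).orthogonalProjectionOnto f : H)‖ ^ 2 ≤ B * ‖f‖ ^ 2)

/-- `W = {(W i, ω i)}` is a fusion Riesz basis for `H`. -/
def IsFusionRieszBasis {H : Type} [NormedAddCommGroup H] [InnerProductSpace ℂ H]
    {ι : Type} (W : ι → Submodule ℂ H) (ω : ι → ℝ) : Prop :=
  (∀ i, 0 < ω i) ∧ (⨆ i, W i).topologicalClosure = ⊤ ∧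
  ∃ C D : ℝ, 0 < C ∧ C ≤ D ∧ ∀ (s : Finset ι) (f : ∀ i, W i),
    (C * ∑ j ∈ s, ‖(f j : H)‖ ^ 2 ≤ ‖∑ j ∈ s, ω j • (f j : H)‖ ^ 2) ∧
    (‖∑ j ∈ s, ω j • (f j : H)‖ ^ 2 ≤ D * ∑ j ∈ s, ‖(f j : H)‖ ^ 2)

/-! Applying `U` coordinatewise is a linear isomorphism `(⊕ W i)_{ℓ²} ≃ (⊕ Z i)_{ℓ²}` which
intertwines the synthesis operators, `T_Z ∘ U = U ∘ T_W`. Since `U` is injective on `H`, this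
isomorphism carries `ker T_W` onto `ker T_Z`. -/

universe u

theorem LinearMap.rank_ker_eq_of_comp_eq {R N N' : Type*} {M M' : Type u} [Ring R]
    [AddCommGroup M] [Module R M] [AddCommGroup M'] [Module R M']
    [AddCommGroup N] [Module R N] [AddCommGroup N'] [Module R N']
    {T : M →ₗ[R] N} {T' : M' →ₗ[R] N'} (e : M ≃ₗ[R] M') {u : N →ₗ[R] N'}
    (hu : Function.Injective u) (h : T' ∘ₗ e = u ∘ₗ T) :
    Module.rank R (LinearMap.ker T') = Module.rank R (LinearMap.ker T) := by
  have hker : (LinearMap.ker T).map (e : M →ₗ[R] M') = LinearMap.ker T' := by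
    rw [← LinearMap.ker_comp_of_ker_eq_bot T (LinearMap.ker_eq_bot.2 hu), ← h,
      LinearMap.ker_comp, Submodule.map_comap_eq_of_surjective e.surjective]
  rw [← hker, e.rank_map_eq]

section lpMap

variable {𝕜 E F ι : Type*} [NontriviallyNormedField 𝕜]
  [NormedAddCommGroup E] [NormedSpace 𝕜 E] [NormedAddCommGroup F] [NormedSpace 𝕜 F]
  {p : ℝ≥0∞} {W : ι → Submodule 𝕜 E} {Z : ι → Submodule 𝕜 F}

def lpMap (U : E →L[𝕜] F) (hWZ : ∀ i, W i ≤ (Z i).comap (U : E →ₗ[𝕜] F)) :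
    lp (fun i => W i) p →ₗ[𝕜] lp (fun i => Z i) p where
  toFun g := ⟨fun i => ⟨U (g i), hWZ i (g i).2⟩,
    ((lp.memℓp g).norm.const_mul ‖U‖).mono fun i => U.le_opNorm (g i : E)⟩
  map_add' f g := by ext i; exact map_add U _ _
  map_smul' c g := by ext; simp

@[simp]
theorem coe_lpMap_apply (U : E →L[𝕜] F) (hWZ : ∀ i, W i ≤ (Z i).comap (U : E →ₗ[𝕜] F))
    (g : lp (fun i => W i) p) (i : ι) : (lpMap U hWZ g i : F) = U (g i) :=
  rfl

def lpCongr (U : E ≃L[𝕜] F) (hWZ : ∀ i, Z i = (W i).map (U : E →ₗ[𝕜] F)) :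
    lp (fun i => W i) p ≃ₗ[𝕜] lp (fun i => Z i) p where
  __ := lpMap (U : E →L[𝕜] F) fun i x hx => hWZ i ▸ Submodule.mem_map_of_mem hx
  invFun := lpMap (U.symm : F →L[𝕜] E) fun i x hx => by
    rw [hWZ i] at hx
    obtain ⟨y, hy, rfl⟩ := hx
    simpa using hy
  left_inv g := by ext; simp
  right_inv g := by ext; simp

@[simp]
theorem coe_lpCongr_apply (U : E ≃L[𝕜] F) (hWZ : ∀ i, Z i = (W i).map (U : E →ₗ[𝕜] F))
    (g : lp (fun i => W i) p) (i : ι) : (lpCongr U hWZ g i : F) = U (g i) :=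
  rfl

end lpMap

theorem excess_of_equivalent_fusionFrames_general
    {H : Type} [NormedAddCommGroup H] [InnerProductSpace ℂ H]
    {ι : Type} (W Z : ι → Submodule ℂ H) (ω : ι → ℝ)
    (U : H ≃L[ℂ] H)
    (hU : ∀ i, Z i = (W i).map (U : H →ₗ[ℂ] H))
    (TW : lp (fun i => ↥(W i)) 2 →L[ℂ] H)
    (hTW : ∀ g : lp (fun i => ↥(W i)) 2, TW g = ∑' i, ω i • ((g i : H)))
    (TZ : lp (fun i => ↥(Z i)) 2 →L[ℂ] H)
    (hTZ : ∀ g : lp (fun i => ↥(Z i)) 2, TZ g = ∑' i, ω i • ((g i : H))) :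
    Module.rank ℂ (LinearMap.ker (TZ : lp (fun i => ↥(Z i)) 2 →ₗ[ℂ] H)) =
      Module.rank ℂ (LinearMap.ker (TW : lp (fun i => ↥(W i)) 2 →ₗ[ℂ] H)) := by
  have hsynthesis : (TZ : lp (fun i => ↥(Z i)) 2 →ₗ[ℂ] H) ∘ₗ (lpCongr U hU).toLinearMap =
      (U : H →ₗ[ℂ] H) ∘ₗ (TW : lp (fun i => ↥(W i)) 2 →ₗ[ℂ] H) := by
    ext g
    simp only [LinearMap.coe_comp, ContinuousLinearMap.coe_coe, LinearEquiv.coe_coe,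
      Function.comp_apply, hTZ, coe_lpCongr_apply, ContinuousLinearEquiv.coe_toLinearEquiv, hTW,
      U.map_tsum]
    exact tsum_congr fun i => ((U : H →L[ℂ] H).map_smul_of_tower (ω i) (g i : H)).symm
  exact LinearMap.rank_ker_eq_of_comp_eq (lpCongr U hU) U.injective hsynthesis

/-- equivalent fusion frames (`Z i = U (W i)` with `U` a bounded
invertible operator) have the same excess. -/
theorem excess_of_equivalent_fusionFrames
    {H : Type} [NormedAddCommGroup H] [InnerProductSpace ℂ H] [CompleteSpace H]
    {ι : Type} (W Z : ι → Submodule ℂ H)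
    [∀ i, CompleteSpace (W i)] [∀ i, CompleteSpace (Z i)] (ω : ι → ℝ)
    (hW : IsFusionFrame W ω) (hZ : IsFusionFrame Z ω)
    (U : H ≃L[ℂ] H)
    (hU : ∀ i, Z i = (W i).map (U : H →ₗ[ℂ] H))
    (TW : lp (fun i => ↥(W i)) 2 →L[ℂ] H)
    (hTW : ∀ g : lp (fun i => ↥(W i)) 2, TW g = ∑' i, ω i • ((g i : H)))
    (TZ : lp (fun i => ↥(Z i)) 2 →L[ℂ] H)
    (hTZ : ∀ g : lp (fun i => ↥(Z i)) 2, TZ g = ∑' i, ω i • ((g i : H))) :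
    Module.rank ℂ (LinearMap.ker (TZ : lp (fun i => ↥(Z i)) 2 →ₗ[ℂ] H)) =
      Module.rank ℂ (LinearMap.ker (TW : lp (fun i => ↥(W i)) 2 →ₗ[ℂ] H)) :=
  excess_of_equivalent_fusionFrames_general W Z ω U hU TW hTW TZ hTZ
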